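/- arXiv:2302.04033 — 2 statements merged into one kernel-verified Lean document; each statement's English description precedes it below -/
import Mathlib

section
/- Fix t ≥ 2 and a vertex v in a connected component of size at least t, with all vertices assigned i.i.d. uniform ranks in [0,1]. In a BFS from v that explores vertices and stops when a vertex of rank lower than rank(v) is found (or t vertices are explored), the probability that exactly k ≤ t vertices are explored is 1/(k(k−1)) for 2 ≤ k < t; consequently the expected number of explored vertices is ∑_{k=2}^{t} k/(k(k−1)) = O(log t). -/
/-!
Conditioning on the rank `a` of `v`, the event that exactly `n + 2` vertices are explored asks
the `n` intermediate ranks to exceed `a` and the next one to fall below it; by independence this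
has probability `(1 - a) ^ n * a`, and integrating over `a ∈ [0, 1]` gives the Beta integral
`1 / ((n + 2) * (n + 1))`. The expected number of explored vertices is then the harmonic number
`H (t - 2)` plus `t / (t - 1)`, which is at most `3 + log t`.
-/

open MeasureTheory ProbabilityTheory Set

theorem integral_one_sub_pow_mul (n : ℕ) :
    ∫ a in (0:ℝ)..1, (1 - a) ^ n * a = 1 / ((n + 2) * (n + 1)) := by
  have hflip :=
    intervalIntegral.integral_comp_sub_left (fun a : ℝ => a ^ n * (1 - a)) 1 (a := 0) (b := 1)
  simp only [sub_sub_cancel, sub_zero, sub_self] at hflip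
  rw [hflip]
  have hsplit : ∀ a : ℝ, a ^ n * (1 - a) = a ^ n - a ^ (n + 1) := fun a => by ring
  simp_rw [hsplit]
  rw [intervalIntegral.integral_sub (intervalIntegral.intervalIntegrable_pow n)
    (intervalIntegral.intervalIntegrable_pow (n + 1)), integral_pow, integral_pow]
  push_cast
  field_simp
  ring

theorem volume_restrict_Icc_Ioi {a : ℝ} (ha : 0 ≤ a) :
    volume.restrict (Icc (0:ℝ) 1) (Ioi a) = ENNReal.ofReal (1 - a) := by
  have : Ioi a ∩ Icc 0 1 = Ioc a 1 := by grind
  rw [Measure.restrict_apply measurableSet_Ioi, this, Real.volume_Ioc]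

theorem volume_restrict_Icc_Iio {a : ℝ} (ha : a ≤ 1) :
    volume.restrict (Icc (0:ℝ) 1) (Iio a) = ENNReal.ofReal a := by
  have : Iio a ∩ Icc 0 1 = Ico 0 a := by grind
  rw [Measure.restrict_apply measurableSet_Iio, this, Real.volume_Ico, sub_zero]

/-- `p.1` is the rank of `v` and `p.2 j` the rank of the `(j + 2)`-th explored vertex. -/
def firstBelowAt (n : ℕ) : Set (ℝ × (Fin (n + 1) → ℝ)) :=
  {p | ∀ j : Fin (n + 1), if (j : ℕ) < n then p.1 < p.2 j else p.2 j < p.1}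

theorem measurableSet_firstBelowAt (n : ℕ) : MeasurableSet (firstBelowAt n) := by
  rw [firstBelowAt, ofPred_forall]
  refine MeasurableSet.iInter fun j => ?_
  split_ifs
  · exact measurableSet_lt measurable_fst ((measurable_pi_apply j).comp measurable_snd)
  · exact measurableSet_lt ((measurable_pi_apply j).comp measurable_snd) measurable_fst

theorem prod_pi_firstBelowAt (n : ℕ) (μ : Measure ℝ) [SigmaFinite μ] :
    (μ.prod (Measure.pi fun _ => μ)) (firstBelowAt n) =
      ∫⁻ a, μ (Ioi a) ^ n * μ (Iio a) ∂μ := by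
  rw [Measure.prod_apply (measurableSet_firstBelowAt n)]
  refine lintegral_congr fun a => ?_
  have hfiber : Prod.mk a ⁻¹' firstBelowAt n =
      univ.pi fun j : Fin (n + 1) => if (j : ℕ) < n then Ioi a else Iio a := by
    ext y
    simp only [firstBelowAt, mem_preimage, mem_ofPred_eq, mem_univ_pi]
    refine forall_congr' fun j => ?_
    split_ifs <;> rfl
  rw [hfiber, Measure.pi_pi, Fin.prod_univ_castSucc]
  simp

theorem setLIntegral_Icc_Ioi_pow_mul_Iio (n : ℕ) :
    ∫⁻ a in Icc (0:ℝ) 1, volume.restrict (Icc (0:ℝ) 1) (Ioi a) ^ n *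
      volume.restrict (Icc (0:ℝ) 1) (Iio a) = ENNReal.ofReal (1 / ((n + 2) * (n + 1))) := by
  have hint : ∀ a ∈ Icc (0:ℝ) 1, volume.restrict (Icc (0:ℝ) 1) (Ioi a) ^ n *
      volume.restrict (Icc (0:ℝ) 1) (Iio a) = ENNReal.ofReal ((1 - a) ^ n * a) := by
    rintro a ⟨ha0, ha1⟩
    rw [volume_restrict_Icc_Ioi ha0, volume_restrict_Icc_Iio ha1,
      ← ENNReal.ofReal_pow (by linarith), ← ENNReal.ofReal_mul (by positivity)]
  rw [setLIntegral_congr_fun measurableSet_Icc hint, ← ofReal_integral_eq_lintegral_ofReal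
    (by fun_prop : Continuous fun a : ℝ => (1 - a) ^ n * a).integrableOn_Icc
    ((ae_restrict_iff' measurableSet_Icc).2 (ae_of_all _ fun a ⟨ha0, ha1⟩ => by
      have : 0 ≤ 1 - a := by linarith
      positivity)),
    integral_Icc_eq_integral_Ioc, ← intervalIntegral.integral_of_le zero_le_one,
    integral_one_sub_pow_mul]

theorem map_head_tail_eq_prod_pi {Ω : Type*} [MeasurableSpace Ω] {P : Measure Ω}
    {r : ℕ → Ω → ℝ} (hmeas : ∀ i, Measurable (r i)) (hind : iIndepFun r P)
    {μ : Measure ℝ} [SigmaFinite μ] (hlaw : ∀ i, P.map (r i) = μ) (m : ℕ) :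
    P.map (fun ω => (r 0 ω, fun j : Fin m => r (j + 1) ω)) =
      μ.prod (Measure.pi fun _ => μ) := by
  have hpi : P.map (fun ω (i : Fin (m + 1)) => r i ω) = Measure.pi fun _ => μ := by
    rw [(hind.precomp Fin.val_injective).map_fun_eq_pi_map
      fun i : Fin (m + 1) => (hmeas i).aemeasurable]
    simp only [hlaw]
  have hcomp : (fun ω => (r 0 ω, fun j : Fin m => r (j + 1) ω)) =
      MeasurableEquiv.piFinSuccAbove (fun _ => ℝ) 0 ∘ fun ω (i : Fin (m + 1)) => r i ω := by
    ext ω <;> simp [MeasurableEquiv.piFinSuccAbove, Fin.tail]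
  rw [hcomp, ← Measure.map_map (MeasurableEquiv.piFinSuccAbove (fun _ => ℝ) 0).measurable
    (measurable_pi_lambda _ fun i => hmeas i), hpi]
  exact (measurePreserving_piFinSuccAbove (fun _ => μ) 0).map_eq

theorem setOf_explores_eq_preimage_firstBelowAt {Ω : Type*} (r : ℕ → Ω → ℝ) (n : ℕ) :
    {ω | (∀ i : ℕ, 1 ≤ i → i ≤ n → r 0 ω < r i ω) ∧ r (n + 1) ω < r 0 ω} =
      (fun ω => (r 0 ω, fun j : Fin (n + 1) => r (j + 1) ω)) ⁻¹' firstBelowAt n := by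
  ext ω
  simp only [firstBelowAt, mem_preimage, mem_ofPred_eq]
  constructor
  · rintro ⟨habove, hbelow⟩ j
    split_ifs with hj
    · exact habove (j + 1) (by omega) hj
    · rwa [show (j : ℕ) = n by omega]
  · intro h
    refine ⟨fun i hi1 hin => ?_, by simpa using h (Fin.last n)⟩
    obtain ⟨j, rfl⟩ : ∃ j, i = j + 1 := ⟨i - 1, by omega⟩
    simpa [show j < n by omega] using h ⟨j, by omega⟩

theorem measure_explores_eq {Ω : Type*} [MeasurableSpace Ω] {P : Measure Ω}
    {r : ℕ → Ω → ℝ} (hmeas : ∀ i, Measurable (r i)) (hind : iIndepFun r P)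
    (hunif : ∀ i, P.map (r i) = volume.restrict (Icc (0:ℝ) 1)) {k : ℕ} (hk : 2 ≤ k) :
    P {ω | (∀ i : ℕ, 1 ≤ i → i ≤ k - 2 → r 0 ω < r i ω) ∧ r (k - 1) ω < r 0 ω}
      = ENNReal.ofReal (1 / ((k : ℝ) * ((k : ℝ) - 1))) := by
  obtain ⟨n, rfl⟩ : ∃ n, k = n + 2 := ⟨k - 2, by omega⟩
  have hmeas_pair : Measurable fun ω => (r 0 ω, fun j : Fin (n + 1) => r (j + 1) ω) :=
    (hmeas 0).prodMk (measurable_pi_lambda _ fun j => hmeas _)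
  rw [Nat.add_sub_cancel, show n + 2 - 1 = n + 1 from rfl,
    setOf_explores_eq_preimage_firstBelowAt, ← Measure.map_apply hmeas_pair
      (measurableSet_firstBelowAt n), map_head_tail_eq_prod_pi hmeas hind hunif,
    prod_pi_firstBelowAt, setLIntegral_Icc_Ioi_pow_mul_Iio]
  congr 1
  push_cast
  ring

theorem sum_Icc_one_div_mul_sub_one (m : ℕ) :
    ∑ k ∈ Finset.Icc 2 (m + 1), 1 / ((k : ℝ) * (k - 1)) = 1 - 1 / (m + 1) := by
  induction m with
  | zero => simp
  | succ m ih =>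
    rw [Finset.sum_Icc_succ_top (by omega), ih]
    push_cast
    field_simp
    ring

theorem sum_Icc_mul_one_div_mul_sub_one (m : ℕ) :
    ∑ k ∈ Finset.Icc 2 (m + 1), (k : ℝ) * (1 / (k * (k - 1))) = harmonic m := by
  induction m with
  | zero => simp
  | succ m ih =>
    rw [Finset.sum_Icc_succ_top (by omega), ih, harmonic_succ]
    push_cast
    field_simp
    ring

theorem expected_explored_le {t : ℕ} (ht : 2 ≤ t) {p : ℕ → ℝ}
    (hp : ∀ k ∈ Finset.Icc 2 (t - 1), p k = 1 / ((k : ℝ) * (k - 1))) :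
    ∑ k ∈ Finset.Icc 2 (t - 1), k * p k + t * (1 - ∑ k ∈ Finset.Icc 2 (t - 1), p k)
      ≤ 3 + Real.log t := by
  obtain ⟨m, rfl⟩ : ∃ m, t = m + 2 := ⟨t - 2, by omega⟩
  rw [show m + 2 - 1 = m + 1 from rfl] at hp ⊢
  rw [Finset.sum_congr rfl fun k hk => by rw [hp k hk], Finset.sum_congr rfl hp,
    sum_Icc_mul_one_div_mul_sub_one, sum_Icc_one_div_mul_sub_one]
  have hharmonic : (harmonic m : ℝ) ≤ 1 + Real.log (m + 2) := by
    refine (harmonic_le_one_add_log m).trans (add_le_add_right ?_ 1)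
    rcases m.eq_zero_or_pos with rfl | hm
    · simp [Real.log_nonneg]
    · exact Real.log_le_log (by positivity) (by linarith)
  have hlast : ((m + 2 : ℕ) : ℝ) * (1 - (1 - 1 / (m + 1))) ≤ 2 := by
    rw [sub_sub_cancel, mul_one_div, div_le_iff₀ (by positivity)]
    push_cast
    linarith
  push_cast at hlast ⊢
  linarith

theorem bfs_exploration_bound_general (t : ℕ) (ht : 2 ≤ t)
    {Ω : Type*} [MeasurableSpace Ω] (P : Measure Ω)
    (r : ℕ → Ω → ℝ)
    (hmeas : ∀ i, Measurable (r i))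
    (hind : iIndepFun r P)
    (hunif : ∀ i, Measure.map (r i) P = (volume.restrict (Set.Icc (0:ℝ) 1))) :
    (∀ k : ℕ, 2 ≤ k → k < t →
      P {ω | (∀ i : ℕ, 1 ≤ i → i ≤ k - 2 → r 0 ω < r i ω) ∧ r (k-1) ω < r 0 ω}
        = ENNReal.ofReal (1 / ((k : ℝ) * ((k : ℝ) - 1)))) ∧
    (∑ k ∈ Finset.Icc 2 (t-1), (k : ℝ) *
        (P {ω | (∀ i : ℕ, 1 ≤ i → i ≤ k - 2 → r 0 ω < r i ω) ∧
                  r (k-1) ω < r 0 ω}).toReal)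
      + (t : ℝ) * (1 - ∑ k ∈ Finset.Icc 2 (t-1),
          (P {ω | (∀ i : ℕ, 1 ≤ i → i ≤ k - 2 → r 0 ω < r i ω) ∧
                    r (k-1) ω < r 0 ω}).toReal)
      ≤ 3 + Real.log t := by
  refine ⟨fun k hk _ => measure_explores_eq hmeas hind hunif hk,
    expected_explored_le ht fun k hk => ?_⟩
  have hk2 : 2 ≤ k := (Finset.mem_Icc.mp hk).1
  have hk2' : (2 : ℝ) ≤ k := by exact_mod_cast hk2
  rw [measure_explores_eq hmeas hind hunif hk2,
    ENNReal.toReal_ofReal (one_div_nonneg.mpr (by nlinarith))]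

/-- BFS exploration with i.i.d. uniform `[0,1]` ranks.  `r 0` is the rank of
`v` and `r 1, r 2, …` are the ranks of the vertices in exploration order (the
component has size at least `t`).  The BFS explores exactly `k` vertices
(`2 ≤ k < t`) iff the ranks `r 1, …, r (k-2)` all exceed `r 0` and
`r (k-1) < r 0`; this event has probability `1/(k(k-1))`.  Consequently the
expected number of explored vertices (where exploring fewer than `t` vertices
with none of the events occurring means `t` vertices are explored) is
`O(log t)`, concretely at most `3 + log t`. -/
theorem bfs_exploration_bound (t : ℕ) (ht : 2 ≤ t)
    {Ω : Type*} [MeasurableSpace Ω] (P : Measure Ω) [IsProbabilityMeasure P]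
    (r : ℕ → Ω → ℝ)
    (hmeas : ∀ i, Measurable (r i))
    (hind : iIndepFun r P)
    (hunif : ∀ i, Measure.map (r i) P = (volume.restrict (Set.Icc (0:ℝ) 1))) :
    (∀ k : ℕ, 2 ≤ k → k < t →
      P {ω | (∀ i : ℕ, 1 ≤ i → i ≤ k - 2 → r 0 ω < r i ω) ∧ r (k-1) ω < r 0 ω}
        = ENNReal.ofReal (1 / ((k : ℝ) * ((k : ℝ) - 1)))) ∧
    (∑ k ∈ Finset.Icc 2 (t-1), (k : ℝ) *
        (P {ω | (∀ i : ℕ, 1 ≤ i → i ≤ k - 2 → r 0 ω < r i ω) ∧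
                  r (k-1) ω < r 0 ω}).toReal)
      + (t : ℝ) * (1 - ∑ k ∈ Finset.Icc 2 (t-1),
          (P {ω | (∀ i : ℕ, 1 ≤ i → i ≤ k - 2 → r 0 ω < r i ω) ∧
                    r (k-1) ω < r 0 ω}).toReal)
      ≤ 3 + Real.log t :=
  bfs_exploration_bound_general t ht P r hmeas hind hunif
end

section
/- If each vertex of a graph has degree at most k and each edge of the graph is sampled independently with probability p, then for the random subgraph H, the expected number of edges of G crossing between distinct connected components of H is at most n/p, where n is the number of vertices (Karger's sampling theorem); as a corollary, if p = √(n/m) then the expected number of edges in H plus the expected number of inter-component edges is O(√(mn)). -/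
/-!
Rank the edges of `G`; an edge crosses its prefix if its endpoints lie in different components of
the graph of sampled edges of smaller rank. The sampled prefix-crossing edges are the edges
Kruskal's algorithm puts into a spanning forest of `H`, so there are at most `n` of them. Whether an
edge crosses its prefix does not depend on its own coin, so the expected numbers of sampled and of
unsampled prefix-crossing edges are `p` and `1 - p` times the expected number of prefix-crossing
edges; hence the unsampled ones number at most `(1 - p) n / p` in expectation. An edge crossing
between components of `H` crosses its prefix and is unsampled. For the corollary, `E |E(H)| = p m`,
and `p m + n / p = 2 √(m n)` at `p = √(n / m)`.
-/

open Finset Function SimpleGraph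

section Bernoulli

variable {ι : Type*} [Fintype ι] (p : ℝ)

def bernoulliWeight (ω : ι → Bool) : ℝ := ∏ i, if ω i then p else 1 - p

lemma bernoulliWeight_nonneg {p : ℝ} (hp0 : 0 ≤ p) (hp1 : p ≤ 1) (ω : ι → Bool) :
    0 ≤ bernoulliWeight p ω :=
  prod_nonneg fun i _ => by split_ifs <;> linarith

variable [DecidableEq ι]

def bernoulliExpect (f : (ι → Bool) → ℝ) : ℝ := ∑ ω, bernoulliWeight p ω * f ω

lemma sum_bernoulliWeight : ∑ ω : ι → Bool, bernoulliWeight p ω = 1 := by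
  unfold bernoulliWeight
  rw [← Fintype.prod_sum fun (_ : ι) (b : Bool) => if b then p else 1 - p]
  simp

variable {p}

lemma bernoulliExpect_mono (hp0 : 0 ≤ p) (hp1 : p ≤ 1) {f g : (ι → Bool) → ℝ}
    (h : ∀ ω, f ω ≤ g ω) : bernoulliExpect p f ≤ bernoulliExpect p g :=
  sum_le_sum fun ω _ => mul_le_mul_of_nonneg_left (h ω) (bernoulliWeight_nonneg hp0 hp1 ω)

variable (p)

lemma bernoulliExpect_const (c : ℝ) : bernoulliExpect p (fun _ : ι → Bool => c) = c := by
  rw [bernoulliExpect, ← sum_mul, sum_bernoulliWeight, one_mul]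

lemma bernoulliExpect_add (f g : (ι → Bool) → ℝ) :
    bernoulliExpect p (fun ω => f ω + g ω) = bernoulliExpect p f + bernoulliExpect p g := by
  simp only [bernoulliExpect, mul_add, sum_add_distrib]

lemma bernoulliExpect_sum {κ : Type*} (s : Finset κ) (f : κ → (ι → Bool) → ℝ) :
    bernoulliExpect p (fun ω => ∑ j ∈ s, f j ω) = ∑ j ∈ s, bernoulliExpect p (f j) := by
  simp only [bernoulliExpect, mul_sum]
  exact sum_comm

lemma bernoulliExpect_mul_of_update_invariant (i : ι) (F : Bool → ℝ)
    {f : (ι → Bool) → ℝ} (hf : ∀ ω b, f (update ω i b) = f ω) :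
    bernoulliExpect p (fun ω => F (ω i) * f ω)
      = (p * F true + (1 - p) * F false) * bernoulliExpect p f := by
  set e := Equiv.funSplitAt i Bool
  set c : Bool → ℝ := fun b => if b then p else 1 - p
  set A := ∑ σ : {j // j ≠ i} → Bool, (∏ j, c (σ j)) * f (e.symm (true, σ))
  have hsplit : ∀ φ : Bool → ℝ,
      bernoulliExpect p (fun ω => φ (ω i) * f ω) = (∑ b, c b * φ b) * A := by
    intro φ
    rw [Fintype.sum_mul_sum, ← Fintype.sum_prod_type']
    refine Fintype.sum_equiv e _ _ fun ω => ?_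
    have hupd : e.symm (true, (e ω).2) = update ω i true := by
      ext j; by_cases hj : j = i <;> simp [e, hj]
    simp only [bernoulliWeight, Fintype.prod_eq_mul_prod_subtype_ne _ i, hupd, hf]
    simp only [e, c, Equiv.funSplitAt_apply]
    ring
  have hA : bernoulliExpect p f = A := by
    simpa [c] using hsplit fun _ => 1
  rw [hsplit, hA]
  simp [c]

omit [DecidableEq ι] in
lemma natCard_subtype_eq_sum_ite (P : ι → Prop) [DecidablePred P] :
    (Nat.card {i // P i} : ℝ) = ∑ i, if P i then 1 else 0 := by
  rw [Nat.card_eq_fintype_card, Fintype.card_subtype, natCast_card_filter]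

lemma bernoulliExpect_card_and_eq (U : ι → (ι → Bool) → Prop) [∀ i ω, Decidable (U i ω)]
    (hU : ∀ i ω b, U i (update ω i b) ↔ U i ω) (b : Bool) :
    bernoulliExpect p (fun ω => (Nat.card {i // U i ω ∧ ω i = b} : ℝ))
      = (if b then p else 1 - p) * ∑ i, bernoulliExpect p (fun ω => if U i ω then 1 else 0) := by
  simp only [natCard_subtype_eq_sum_ite, bernoulliExpect_sum, mul_sum]
  refine sum_congr rfl fun i _ => ?_
  have hind := bernoulliExpect_mul_of_update_invariant p i (fun c => if c = b then 1 else 0)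
    (f := fun ω => if U i ω then 1 else 0) fun ω c => by simp only [hU]
  simp only [ite_zero_mul_ite_zero, mul_one, and_comm] at hind
  rw [hind]
  cases b <;> simp

variable {p}

lemma bernoulliExpect_card_unsampled_le (hp0 : 0 < p) (hp1 : p ≤ 1)
    (U : ι → (ι → Bool) → Prop) (hU : ∀ i ω b, U i (update ω i b) ↔ U i ω) (N : ℝ)
    (hN : ∀ ω, (Nat.card {i // U i ω ∧ ω i = true} : ℝ) ≤ N) :
    bernoulliExpect p (fun ω => (Nat.card {i // U i ω ∧ ω i = false} : ℝ)) ≤ (1 - p) * N / p := by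
  classical
  set S := ∑ i, bernoulliExpect p (fun ω => if U i ω then 1 else 0)
  have hpS : p * S ≤ N := by
    calc p * S = bernoulliExpect p (fun ω => (Nat.card {i // U i ω ∧ ω i = true} : ℝ)) := by
          rw [bernoulliExpect_card_and_eq p U hU, if_pos rfl]
      _ ≤ bernoulliExpect p (fun _ => N) := bernoulliExpect_mono hp0.le hp1 hN
      _ = N := bernoulliExpect_const p N
  rw [bernoulliExpect_card_and_eq p U hU, if_neg Bool.false_ne_true, mul_div_assoc]
  exact mul_le_mul_of_nonneg_left ((le_div_iff₀' hp0).mpr hpS) (by linarith)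

variable (p)

lemma bernoulliExpect_card_sampled :
    bernoulliExpect p (fun ω => (Nat.card {i : ι // ω i = true} : ℝ)) = Fintype.card ι * p := by
  have h := bernoulliExpect_card_and_eq p (fun (_ : ι) _ => True) (fun _ _ _ => Iff.rfl) true
  simp only [true_and, if_true, bernoulliExpect_const, sum_const, card_univ, nsmul_eq_mul,
    mul_one] at h
  rw [h, mul_comm]

end Bernoulli

def maskBelow {ι : Type*} (r : ι → ℕ) (k : ℕ) (ω : ι → Bool) : ι → Bool :=
  fun i => decide (r i < k) && ω i

lemma maskBelow_update_self {ι : Type*} [DecidableEq ι] (r : ι → ℕ) (ω : ι → Bool) (i : ι)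
    (b : Bool) : maskBelow r (r i) (update ω i b) = maskBelow r (r i) ω := by
  ext j
  by_cases hj : j = i <;> simp [maskBelow, hj]

namespace SimpleGraph

variable {V : Type*}

lemma ConnectedComponent.card_lt_card_of_le [Finite V] {G G' : SimpleGraph V} (h : G ≤ G')
    {u v : V} (huv : ¬ G.Reachable u v) (huv' : G'.Reachable u v) :
    Nat.card G'.ConnectedComponent < Nat.card G.ConnectedComponent := by
  have : Fintype G.ConnectedComponent := Fintype.ofFinite _
  have : Fintype G'.ConnectedComponent := Fintype.ofFinite _
  simp only [Nat.card_eq_fintype_card]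
  refine Fintype.card_lt_of_surjective_not_injective _ (ConnectedComponent.surjective_map_ofLE h)
    fun hinj => huv (ConnectedComponent.eq.mp (hinj ?_))
  simpa using huv'

lemma card_connectedComponent_le_card [Finite V] (G : SimpleGraph V) :
    Nat.card G.ConnectedComponent ≤ Nat.card V :=
  Nat.card_le_card_of_surjective _ Quot.mk_surjective

def IsCrossing (H : SimpleGraph V) (e : Sym2 V) : Prop :=
  ∃ u v, e = s(u, v) ∧ ¬ H.Reachable u v

lemma IsCrossing.anti {H H' : SimpleGraph V} (h : H ≤ H') {e : Sym2 V} (he : H'.IsCrossing e) :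
    H.IsCrossing e := by
  obtain ⟨u, v, rfl, huv⟩ := he
  exact ⟨u, v, rfl, fun hr => huv (hr.mono h)⟩

variable (G : SimpleGraph V)

def sampled (ω : G.edgeSet → Bool) : SimpleGraph V :=
  fromEdgeSet {s | ∃ h : s ∈ G.edgeSet, ω ⟨s, h⟩ = true}

variable {G}

lemma sampled_mono {ω ω' : G.edgeSet → Bool} (h : ∀ e, ω e = true → ω' e = true) :
    G.sampled ω ≤ G.sampled ω' :=
  fromEdgeSet_mono fun _ ⟨hs, hω⟩ => ⟨hs, h _ hω⟩

lemma sampled_adj {ω : G.edgeSet → Bool} {e : G.edgeSet} {u v : V} (he : (e : Sym2 V) = s(u, v))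
    (hω : ω e = true) : (G.sampled ω).Adj u v := by
  have huv : G.Adj u v := G.mem_edgeSet.mp (he ▸ e.2)
  refine (fromEdgeSet_adj _).mpr ⟨⟨he ▸ e.2, ?_⟩, huv.ne⟩
  rwa [show (⟨s(u, v), he ▸ e.2⟩ : G.edgeSet) = e from Subtype.ext he.symm]

variable (G)

def CrossesPrefix (r : G.edgeSet → ℕ) (ω : G.edgeSet → Bool) (e : G.edgeSet) : Prop :=
  (G.sampled (maskBelow r (r e) ω)).IsCrossing e

variable {G}

lemma crossesPrefix_update_self [DecidableEq V] {r : G.edgeSet → ℕ} {ω : G.edgeSet → Bool}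
    {e : G.edgeSet} (b : Bool) :
    G.CrossesPrefix r (update ω e b) e ↔ G.CrossesPrefix r ω e := by
  rw [CrossesPrefix, CrossesPrefix, maskBelow_update_self]

lemma crossesPrefix_of_isCrossing {r : G.edgeSet → ℕ} {ω : G.edgeSet → Bool} {e : G.edgeSet}
    (he : (G.sampled ω).IsCrossing e) : G.CrossesPrefix r ω e ∧ ω e = false := by
  refine ⟨he.anti (sampled_mono fun f hf => by simp_all [maskBelow]), ?_⟩
  obtain ⟨u, v, huv, hr⟩ := he
  exact Bool.eq_false_iff.mpr fun hω => hr (sampled_adj huv hω).reachable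

variable [Finite V] [Fintype G.edgeSet]

open Classical in
lemma card_crossesPrefix_sampled_add_card_le {r : G.edgeSet → ℕ} (hr : Injective r)
    (ω : G.edgeSet → Bool) (k : ℕ) :
    #{e | r e < k ∧ G.CrossesPrefix r ω e ∧ ω e = true}
      + Nat.card (G.sampled (maskBelow r k ω)).ConnectedComponent ≤ Nat.card V := by
  induction k with
  | zero => simpa using card_connectedComponent_le_card _
  | succ k ih =>
    have hmono : G.sampled (maskBelow r k ω) ≤ G.sampled (maskBelow r (k + 1) ω) :=
      sampled_mono fun e he => by
        simp only [maskBelow, Bool.and_eq_true, decide_eq_true_eq] at he ⊢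
        exact ⟨Nat.lt_succ_of_lt he.1, he.2⟩
    by_cases hnew : ∃ e, r e = k ∧ G.CrossesPrefix r ω e ∧ ω e = true
    · obtain ⟨e₀, rfl, ⟨u, v, huv, hr₀⟩, hω₀⟩ := hnew
      have hsub : ({e | r e < r e₀ + 1 ∧ G.CrossesPrefix r ω e ∧ ω e = true} : Finset _)
          ⊆ insert e₀ ({e | r e < r e₀ ∧ G.CrossesPrefix r ω e ∧ ω e = true} : Finset _) := by
        intro e he
        simp only [mem_filter, mem_univ, true_and, mem_insert] at he ⊢
        rcases Nat.lt_succ_iff_lt_or_eq.mp he.1 with h | h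
        · exact Or.inr ⟨h, he.2⟩
        · exact Or.inl (hr h)
      have hjoin := ConnectedComponent.card_lt_card_of_le hmono hr₀
        (sampled_adj huv (by simp [maskBelow, hω₀])).reachable
      have := (card_le_card hsub).trans (card_insert_le _ _)
      omega
    · have hsub : ({e | r e < k + 1 ∧ G.CrossesPrefix r ω e ∧ ω e = true} : Finset _)
          ⊆ ({e | r e < k ∧ G.CrossesPrefix r ω e ∧ ω e = true} : Finset _) := by
        intro e he
        simp only [mem_filter, mem_univ, true_and] at he ⊢
        rcases Nat.lt_succ_iff_lt_or_eq.mp he.1 with h | h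
        · exact ⟨h, he.2⟩
        · exact absurd ⟨e, h, he.2⟩ hnew
      have := card_le_card hsub
      have := ConnectedComponent.card_le_card_of_le hmono
      omega

lemma natCard_crossesPrefix_sampled_le {r : G.edgeSet → ℕ} (hr : Injective r)
    (ω : G.edgeSet → Bool) :
    Nat.card {e // G.CrossesPrefix r ω e ∧ ω e = true} ≤ Nat.card V := by
  classical
  have hbound : ∀ e, r e < univ.sup r + 1 := fun e => Nat.lt_succ_of_le (le_sup (mem_univ e))
  calc Nat.card {e // G.CrossesPrefix r ω e ∧ ω e = true}
      = #{e | r e < univ.sup r + 1 ∧ G.CrossesPrefix r ω e ∧ ω e = true} := by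
        simp only [hbound, true_and, Nat.card_eq_fintype_card, Fintype.card_subtype]
    _ ≤ Nat.card V :=
        (Nat.le_add_right _ _).trans (card_crossesPrefix_sampled_add_card_le hr ω _)

end SimpleGraph

lemma mul_sqrt_div_add_div_sqrt_div {a b : ℝ} (ha : 0 < a) (hb : 0 < b) :
    a * √(b / a) + b / √(b / a) = 2 * √(a * b) := by
  have hs : 0 < √(b / a) := Real.sqrt_pos.mpr (div_pos hb ha)
  have hb' : b = a * √(b / a) ^ 2 := by rw [Real.sq_sqrt (div_pos hb ha).le]; field_simp
  have hab : √(a * b) = a * √(b / a) := by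
    rw [← Real.sqrt_sq (mul_pos ha hs).le]
    congr 1
    nth_rewrite 1 [hb']
    ring
  rw [hab]
  nth_rewrite 2 [hb']
  field_simp
  ring

theorem karger_sampling_general {V : Type} [Fintype V] [DecidableEq V]
    (G : SimpleGraph V) [DecidableRel G.Adj] (n m : ℕ)
    (hn : Fintype.card V = n) (hm : G.edgeFinset.card = m)
    (p : ℝ) (hp0 : 0 < p) (hp1 : p < 1) :
    (∑ ω : G.edgeSet → Bool,
        (∏ e : G.edgeSet, (if ω e then p else 1 - p)) *
          (Nat.card {e : G.edgeSet // ∃ u v : V, (e : Sym2 V) = s(u, v) ∧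
              ¬ (SimpleGraph.fromEdgeSet
                  {s : Sym2 V | ∃ h : s ∈ G.edgeSet, ω ⟨s, h⟩ = true}).Reachable u v} : ℝ))
      ≤ (n : ℝ) / p ∧
    (p = Real.sqrt ((n : ℝ) / (m : ℝ)) →
      (∑ ω : G.edgeSet → Bool,
          (∏ e : G.edgeSet, (if ω e then p else 1 - p)) *
            ((Nat.card {e : G.edgeSet // ω e = true} : ℝ) +
              (Nat.card {e : G.edgeSet // ∃ u v : V, (e : Sym2 V) = s(u, v) ∧
                ¬ (SimpleGraph.fromEdgeSet
                    {s : Sym2 V | ∃ h : s ∈ G.edgeSet, ω ⟨s, h⟩ = true}).Reachable u v} : ℝ)))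
        ≤ 2 * Real.sqrt ((m : ℝ) * (n : ℝ))) := by
  classical
  set r : G.edgeSet → ℕ := fun e => Fintype.equivFin G.edgeSet e
  have hr : Injective r := Fin.val_injective.comp (Fintype.equivFin _).injective
  have hcrossing : bernoulliExpect p
      (fun ω => (Nat.card {e : G.edgeSet // (G.sampled ω).IsCrossing e} : ℝ)) ≤ n / p :=
    calc _ ≤ bernoulliExpect p
          (fun ω => (Nat.card {e // G.CrossesPrefix r ω e ∧ ω e = false} : ℝ)) :=
          bernoulliExpect_mono hp0.le hp1.le fun ω => by
            exact_mod_cast Nat.card_mono (Set.toFinite _) fun e => crossesPrefix_of_isCrossing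
      _ ≤ (1 - p) * n / p :=
          bernoulliExpect_card_unsampled_le hp0 hp1.le (fun e ω => G.CrossesPrefix r ω e)
            (fun _ _ b => crossesPrefix_update_self b) n fun ω => by
              exact_mod_cast (natCard_crossesPrefix_sampled_le hr ω).trans_eq
                (Nat.card_eq_fintype_card.trans hn)
      _ ≤ n / p := by gcongr; exact mul_le_of_le_one_left n.cast_nonneg (by linarith)
  refine ⟨hcrossing, fun hp => ?_⟩
  obtain ⟨hn0, hm0⟩ : 0 < (n : ℝ) ∧ 0 < (m : ℝ) := by
    rcases div_pos_iff.mp (Real.sqrt_pos.mp (hp ▸ hp0)) with h | h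
    · exact h
    · exact absurd h.1 (Nat.cast_nonneg n).not_gt
  calc _ = bernoulliExpect p (fun ω => (Nat.card {e : G.edgeSet // ω e = true} : ℝ))
        + bernoulliExpect p
          (fun ω => (Nat.card {e : G.edgeSet // (G.sampled ω).IsCrossing e} : ℝ)) :=
        bernoulliExpect_add p _ _
    _ ≤ m * p + n / p := by
        rw [bernoulliExpect_card_sampled, ← hm, edgeFinset, Set.toFinset_card]
        gcongr
    _ = 2 * √(m * n) := by rw [hp]; exact mul_sqrt_div_add_div_sqrt_div hm0 hn0

/-- Karger's sampling theorem. Let `G` be a simple graph on `n` vertices with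
`m ≥ n` edges in which each vertex has degree at most `kdeg`, and let `H` be
the random subgraph obtained by keeping each edge independently with
probability `p`.  The expected number of edges of `G` whose endpoints lie in
distinct connected components of `H` is at most `n/p`.  As a corollary, if
`p = √(n/m)` then the expected number of edges of `H` plus the expected
number of inter-component edges is at most `2√(mn) = O(√(mn))`.  Expectations
are written as explicit sums over all outcomes `ω : G.edgeSet → Bool`, where
an outcome has probability `∏_e (p if e sampled else 1-p)`. -/
theorem karger_sampling {V : Type} [Fintype V] [DecidableEq V]
    (G : SimpleGraph V) [DecidableRel G.Adj] (kdeg n m : ℕ)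
    (hn : Fintype.card V = n) (hm : G.edgeFinset.card = m)
    (hdeg : ∀ v : V, G.degree v ≤ kdeg) (hmn : n ≤ m)
    (p : ℝ) (hp0 : 0 < p) (hp1 : p < 1) :
    (∑ ω : G.edgeSet → Bool,
        (∏ e : G.edgeSet, (if ω e then p else 1 - p)) *
          (Nat.card {e : G.edgeSet // ∃ u v : V, (e : Sym2 V) = s(u, v) ∧
              ¬ (SimpleGraph.fromEdgeSet
                  {s : Sym2 V | ∃ h : s ∈ G.edgeSet, ω ⟨s, h⟩ = true}).Reachable u v} : ℝ))
      ≤ (n : ℝ) / p ∧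
    (p = Real.sqrt ((n : ℝ) / (m : ℝ)) →
      (∑ ω : G.edgeSet → Bool,
          (∏ e : G.edgeSet, (if ω e then p else 1 - p)) *
            ((Nat.card {e : G.edgeSet // ω e = true} : ℝ) +
              (Nat.card {e : G.edgeSet // ∃ u v : V, (e : Sym2 V) = s(u, v) ∧
                ¬ (SimpleGraph.fromEdgeSet
                    {s : Sym2 V | ∃ h : s ∈ G.edgeSet, ω ⟨s, h⟩ = true}).Reachable u v} : ℝ)))
        ≤ 2 * Real.sqrt ((m : ℝ) * (n : ℝ))) :=
  karger_sampling_general G n m hn hm p hp0 hp1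
end
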